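/- arXiv:1308.2033 — 2 statements merged into one kernel-verified Lean document; each statement's English description precedes it below -/
import Mathlib

section
/- Let Y be a complex n-dimensional manifold with two Hermitian forms ω and ω̃ satisfying ω̃ ≥ ω. Let W be an (n,i)-form and η a (0,j)-form. Then pointwise |η ∧ W|_{ω̃} ≤ C |η|_ω · |W|_{ω̃}, where C = (n choose i)(n choose j). -/
open Finset

/-- Let `ω ≤ ω̃` be Hermitian forms on an `n`-dimensional
complex manifold, `W` an `(n,i)`-form and `η` a `(0,j)`-form.  At a point, in
coordinates simultaneously diagonalizing `ω` (as the identity) and `ω̃` with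
eigenvalues `λ_m ≥ 1`, writing `W = ∑_K W_K dz ∧ dz̄_K` and `η = ∑_L η_L dz̄_L`,
one has
`|η|²_ω = ∑_L |η_L|²`,
`|W|²_{ω̃} = ∑_K |W_K|² (∏_m λ_m)⁻¹ (∏_{m∈K} λ_m)⁻¹`, and
`|η ∧ W|_{ω̃} ≤ ∑_{K,L} |η_L| |W_K| ((∏_m λ_m)(∏_{m∈K∪L} λ_m))^{-1/2}`.
The statement `|η ∧ W|_{ω̃} ≤ C |η|_ω |W|_{ω̃}` with `C = (n choose i)(n choose j)`
then reads: -/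
theorem stmt_6 (n i j : ℕ) (lam : Fin n → ℝ) (hlam : ∀ m, 1 ≤ lam m)
    (W η : Finset (Fin n) → ℂ) :
    ∑ K ∈ Finset.powersetCard i (Finset.univ : Finset (Fin n)),
      ∑ L ∈ Finset.powersetCard j (Finset.univ : Finset (Fin n)),
        ‖η L‖ * ‖W K‖ *
          Real.sqrt ((∏ m, lam m)⁻¹ * (∏ m ∈ K ∪ L, lam m)⁻¹)
    ≤ (n.choose i * n.choose j) *
        (Real.sqrt (∑ L ∈ Finset.powersetCard j (Finset.univ : Finset (Fin n)),
            ‖η L‖ ^ 2) *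
         Real.sqrt (∑ K ∈ Finset.powersetCard i (Finset.univ : Finset (Fin n)),
            ‖W K‖ ^ 2 * ((∏ m, lam m)⁻¹ * (∏ m ∈ K, lam m)⁻¹))) := by
  set A := Real.sqrt (∑ L ∈ Finset.powersetCard j (Finset.univ : Finset (Fin n)), ‖η L‖ ^ 2)
  set B := Real.sqrt (∑ K ∈ Finset.powersetCard i (Finset.univ : Finset (Fin n)),
      ‖W K‖ ^ 2 * ((∏ m, lam m)⁻¹ * (∏ m ∈ K, lam m)⁻¹))
  have hApos : 0 ≤ A := Real.sqrt_nonneg _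
  have hBpos : 0 ≤ B := Real.sqrt_nonneg _
  have hprodpos : ∀ s : Finset (Fin n), (0:ℝ) < ∏ m ∈ s, lam m :=
    fun s => Finset.prod_pos fun m _ => lt_of_lt_of_le one_pos (hlam m)
  have key : ∀ K ∈ Finset.powersetCard i (Finset.univ : Finset (Fin n)),
      ∀ L ∈ Finset.powersetCard j (Finset.univ : Finset (Fin n)),
      ‖η L‖ * ‖W K‖ * Real.sqrt ((∏ m, lam m)⁻¹ * (∏ m ∈ K ∪ L, lam m)⁻¹) ≤ A * B := by
    intro K hK L hL
    have h1 : ‖η L‖ ≤ A := by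
      rw [← Real.sqrt_sq (norm_nonneg (η L))]
      apply Real.sqrt_le_sqrt
      exact Finset.single_le_sum (f := fun L => ‖η L‖ ^ 2) (fun x _ => sq_nonneg _) hL
    have hKL : (∏ m ∈ K ∪ L, lam m)⁻¹ ≤ (∏ m ∈ K, lam m)⁻¹ := by
      apply inv_anti₀ (hprodpos K)
      have := Finset.prod_sdiff (f := lam) (Finset.subset_union_left (s₁ := K) (s₂ := L))
      rw [← this]
      have h1 : (1:ℝ) ≤ ∏ m ∈ (K ∪ L) \ K, lam m := by
        calc (1:ℝ) = ∏ m ∈ (K ∪ L) \ K, (1:ℝ) := by simp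
          _ ≤ ∏ m ∈ (K ∪ L) \ K, lam m :=
            Finset.prod_le_prod (fun m _ => zero_le_one) (fun m _ => hlam m)
      nlinarith [hprodpos K]
    have h2 : ‖W K‖ * Real.sqrt ((∏ m, lam m)⁻¹ * (∏ m ∈ K ∪ L, lam m)⁻¹) ≤ B := by
      rw [← Real.sqrt_sq (norm_nonneg (W K)), ← Real.sqrt_mul (sq_nonneg _)]
      apply Real.sqrt_le_sqrt
      refine le_trans ?_ (Finset.single_le_sum (f := fun K =>
        ‖W K‖ ^ 2 * ((∏ m, lam m)⁻¹ * (∏ m ∈ K, lam m)⁻¹))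
        (fun x _ => mul_nonneg (sq_nonneg _)
          (mul_nonneg (inv_nonneg.2 (hprodpos _).le) (inv_nonneg.2 (hprodpos _).le))) hK)
      apply mul_le_mul_of_nonneg_left _ (sq_nonneg _)
      exact mul_le_mul_of_nonneg_left hKL (inv_nonneg.2 (hprodpos _).le)
    calc ‖η L‖ * ‖W K‖ * Real.sqrt ((∏ m, lam m)⁻¹ * (∏ m ∈ K ∪ L, lam m)⁻¹)
        = ‖η L‖ * (‖W K‖ * Real.sqrt ((∏ m, lam m)⁻¹ * (∏ m ∈ K ∪ L, lam m)⁻¹)) := by ring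
      _ ≤ A * B := mul_le_mul h1 h2 (mul_nonneg (norm_nonneg _) (Real.sqrt_nonneg _)) hApos
  calc ∑ K ∈ Finset.powersetCard i (Finset.univ : Finset (Fin n)),
      ∑ L ∈ Finset.powersetCard j (Finset.univ : Finset (Fin n)),
        ‖η L‖ * ‖W K‖ * Real.sqrt ((∏ m, lam m)⁻¹ * (∏ m ∈ K ∪ L, lam m)⁻¹)
      ≤ ∑ K ∈ Finset.powersetCard i (Finset.univ : Finset (Fin n)),
        ∑ L ∈ Finset.powersetCard j (Finset.univ : Finset (Fin n)), A * B := by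
        apply Finset.sum_le_sum
        intro K hK
        exact Finset.sum_le_sum fun L hL => key K hK L hL
    _ = (n.choose i * n.choose j) * (A * B) := by
        simp [Finset.sum_const, Finset.card_powersetCard, Finset.card_univ]
        ring
end

section
/- Let F be a line bundle on a smooth projective n-fold X and h a singular metric on F with semi-positive curvature current. Assume: (i) for every m and every s ∈ H⁰_{bdd,h^m}(X,F^m) the multiplication map H^q(X, K_X⊗F⊗I(h)) → H^q(X, K_X⊗F^{m+1}⊗I(h^{m+1})) by s is injective, and (ii) dim H^q(X, K_X⊗F^m⊗I(h^m)) = O(m^{n−q}) as m → ∞. Then H^q(X, K_X⊗F⊗I(h)) = 0 for all q > n − κ_bdd(F,h). -/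
/-- **Nadel-type vanishing, abstract form.**
Here `V m` plays the role of `H⁰_{bdd,h^m}(X, F^m)` and `W m` the role of
`H^q(X, K_X ⊗ F^m ⊗ I(h^m))` for a line bundle `F` with a singular
semi-positively curved metric `h` on a smooth projective `n`-fold `X`.
`Φ m s : W 1 →ₗ W (m+1)` is multiplication by the bounded section `s`.
Assume:
(i) every multiplication map by a nonzero bounded section is injective;
(ii) `dim W m = O(m^{n-q})`;
and that `q > n - κ_bdd(F,h)`, where `κ_bdd` is witnessed by `κ` with
`limsup_k dim V k / k^κ > 0`.  Then `H^q(X, K_X ⊗ F ⊗ I(h)) = W 1 = 0`. -/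
theorem stmt_18 (n q κ : ℕ)
    (V : ℕ → Type*) [∀ m, AddCommGroup (V m)] [∀ m, Module ℂ (V m)]
    [∀ m, FiniteDimensional ℂ (V m)]
    (W : ℕ → Type*) [∀ m, AddCommGroup (W m)] [∀ m, Module ℂ (W m)]
    [∀ m, FiniteDimensional ℂ (W m)]
    (Φ : ∀ m, V m →ₗ[ℂ] (W 1 →ₗ[ℂ] W (m + 1)))
    (hinj : ∀ m, ∀ s : V m, s ≠ 0 → Function.Injective (Φ m s))
    (hgrowth : ∃ C : ℝ, ∀ m : ℕ, 1 ≤ m →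
      (Module.finrank ℂ (W m) : ℝ) ≤ C * (m : ℝ) ^ ((n : ℤ) - q))
    (hκ : ∃ c : ℝ, 0 < c ∧ ∀ N : ℕ, ∃ k, N ≤ k ∧
      c ≤ (Module.finrank ℂ (V k) : ℝ) / (k : ℝ) ^ (κ : ℤ))
    (hq : (n : ℤ) - κ < q) :
    Subsingleton (W 1) := by
  by_contra hns
  rw [not_subsingleton_iff_nontrivial] at hns
  obtain ⟨w, hw⟩ := exists_ne (0 : W 1)
  -- Step 1: dim V k ≤ dim W (k+1)
  have hdim : ∀ k : ℕ, Module.finrank ℂ (V k) ≤ Module.finrank ℂ (W (k + 1)) := by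
    intro k
    apply LinearMap.finrank_le_finrank_of_injective (f := (Φ k).flip w)
    intro s t hst
    by_contra hne
    have hs : s - t ≠ 0 := sub_ne_zero.mpr hne
    have h0 : Φ k (s - t) w = 0 := by
      simp only [map_sub, LinearMap.sub_apply]
      simpa using sub_eq_zero.mpr hst
    exact hw ((hinj k (s - t) hs) (by simpa using h0))
  obtain ⟨C, hC⟩ := hgrowth
  obtain ⟨c, hc, hlim⟩ := hκ
  set C' : ℝ := max C 1 with hC'
  have hC'1 : (1 : ℝ) ≤ C' := le_max_right _ _
  have hC'0 : (0 : ℝ) < C' := lt_of_lt_of_le one_pos hC'1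
  -- choose a large k
  obtain ⟨k, hkN, hk⟩ := hlim (max 1 ⌈C' * 2 ^ κ / c⌉₊)
  have hk1 : 1 ≤ k := le_trans (le_max_left _ _) hkN
  have hx1 : (1 : ℝ) ≤ (k : ℝ) := by exact_mod_cast hk1
  have hx0 : (0 : ℝ) < (k : ℝ) := lt_of_lt_of_le one_pos hx1
  have hxbig : C' * 2 ^ κ / c < (k : ℝ) + 1 := by
    have h1 : (⌈C' * 2 ^ κ / c⌉₊ : ℝ) ≤ (k : ℝ) := by
      exact_mod_cast le_trans (le_max_right _ _) hkN
    have h2 : C' * 2 ^ κ / c ≤ (⌈C' * 2 ^ κ / c⌉₊ : ℝ) := Nat.le_ceil _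
    linarith
  have hpow : (0 : ℝ) < (k : ℝ) ^ κ := pow_pos hx0 κ
  -- lower bound on dim V k
  have hVlow : c * (k : ℝ) ^ κ ≤ (Module.finrank ℂ (V k) : ℝ) := by
    have := hk
    rw [zpow_natCast] at this
    calc c * (k : ℝ) ^ κ
        ≤ (Module.finrank ℂ (V k) : ℝ) / (k : ℝ) ^ κ * (k : ℝ) ^ κ := by
          exact mul_le_mul_of_nonneg_right this (le_of_lt hpow)
      _ = (Module.finrank ℂ (V k) : ℝ) := div_mul_cancel₀ _ (ne_of_gt hpow)
  -- upper bound on dim W (k+1)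
  have hWup : (Module.finrank ℂ (W (k + 1)) : ℝ) ≤ C' * ((k : ℝ) + 1) ^ ((n : ℤ) - q) := by
    have h1 := hC (k + 1) (by omega)
    have hz : (0 : ℝ) < ((k : ℝ) + 1) ^ ((n : ℤ) - q) := zpow_pos (by linarith) _
    have : ((k + 1 : ℕ) : ℝ) = (k : ℝ) + 1 := by push_cast; ring
    rw [this] at h1
    calc (Module.finrank ℂ (W (k + 1)) : ℝ)
        ≤ C * ((k : ℝ) + 1) ^ ((n : ℤ) - q) := h1
      _ ≤ C' * ((k : ℝ) + 1) ^ ((n : ℤ) - q) :=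
          mul_le_mul_of_nonneg_right (le_max_left _ _) (le_of_lt hz)
  -- estimate the upper bound
  have hy1 : (1 : ℝ) ≤ (k : ℝ) + 1 := by linarith
  have hy0 : (0 : ℝ) < (k : ℝ) + 1 := by linarith
  have hexp : (n : ℤ) - q ≤ (κ : ℤ) - 1 := by omega
  have hstep1 : ((k : ℝ) + 1) ^ ((n : ℤ) - q) ≤ ((k : ℝ) + 1) ^ ((κ : ℤ) - 1) :=
    zpow_le_zpow_right₀ hy1 hexp
  have hstep2 : ((k : ℝ) + 1) ^ ((κ : ℤ) - 1) = ((k : ℝ) + 1) ^ κ / ((k : ℝ) + 1) := by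
    rw [zpow_sub₀ (ne_of_gt hy0), zpow_natCast, zpow_one]
  have hstep3 : ((k : ℝ) + 1) ^ κ ≤ 2 ^ κ * (k : ℝ) ^ κ := by
    calc ((k : ℝ) + 1) ^ κ ≤ (2 * (k : ℝ)) ^ κ := by
          apply pow_le_pow_left₀ (by linarith) (by linarith)
      _ = 2 ^ κ * (k : ℝ) ^ κ := mul_pow _ _ _
  have hfinal : C' * ((k : ℝ) + 1) ^ ((n : ℤ) - q) < c * (k : ℝ) ^ κ := by
    have h2 : C' * ((k : ℝ) + 1) ^ ((n : ℤ) - q)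
        ≤ C' * (2 ^ κ * (k : ℝ) ^ κ / ((k : ℝ) + 1)) := by
      apply mul_le_mul_of_nonneg_left _ (le_of_lt hC'0)
      calc ((k : ℝ) + 1) ^ ((n : ℤ) - q) ≤ ((k : ℝ) + 1) ^ ((κ : ℤ) - 1) := hstep1
        _ = ((k : ℝ) + 1) ^ κ / ((k : ℝ) + 1) := hstep2
        _ ≤ 2 ^ κ * (k : ℝ) ^ κ / ((k : ℝ) + 1) := by gcongr
    have h3 : C' * (2 ^ κ * (k : ℝ) ^ κ / ((k : ℝ) + 1)) < c * (k : ℝ) ^ κ := by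
      rw [div_lt_iff₀ hc] at hxbig
      have : C' * 2 ^ κ < c * ((k : ℝ) + 1) := by linarith [mul_comm c ((k : ℝ) + 1)]
      rw [mul_div_assoc', div_lt_iff₀ hy0]
      calc C' * (2 ^ κ * (k : ℝ) ^ κ) = (C' * 2 ^ κ) * (k : ℝ) ^ κ := by ring
        _ < (c * ((k : ℝ) + 1)) * (k : ℝ) ^ κ :=
            mul_lt_mul_of_pos_right this hpow
        _ = c * (k : ℝ) ^ κ * ((k : ℝ) + 1) := by ring
    linarith
  have hVW : (Module.finrank ℂ (V k) : ℝ) ≤ (Module.finrank ℂ (W (k + 1)) : ℝ) := by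
    exact_mod_cast hdim k
  linarith
end
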